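/- arXiv:2010.07753 — 2 statements merged into one kernel-verified Lean document; each statement's English description precedes it below -/
import Mathlib

section
/- Let U : ℝ^m → ℝ and g : ℝ^m → ℝ^k be twice continuously differentiable, with G(q) the Jacobian of g and ∇²U(q), ∇²g_i(q) the Hessian matrices of U and of the components g_i. Let L be a real m×m matrix with Lᵀ = -L. Let q, p : ℝ → ℝ^m be differentiable with q̇_t = p_t, and let λ : ℝ → ℝ^k. Suppose a, b, c, d : ℝ → ℝ^m are differentiable and m', n' : ℝ → ℝ^k are functions such that for all t: ȧ_t = b_t, ḃ_t = -∇²U(q_t) a_t - L b_t - G(q_t)ᵀ m'_t - Σ_{i=1}^k (λ_t)_i ∇²g_i(q_t) a_t, ċ_t = d_t, ḋ_t = -∇²U(q_t) c_t - L d_t - G(q_t)ᵀ n'_t - Σ_{i=1}^k (λ_t)_i ∇²g_i(q_t) c_t, and moreover G(q_t) a_t = 0 and G(q_t) c_t = 0 for all t. Then the function t ↦ ⟨a_t, d_t⟩ - ⟨c_t, b_t⟩ + ⟨a_t, L c_t⟩ is constant on ℝ. -/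
/-!
Differentiating `ω(t) = ⟨a, d⟩ - ⟨c, b⟩ + ⟨a, L c⟩` with the product rule, the variational
equations leave only `⟨c, H a⟩ - ⟨a, H c⟩ + ⟨c, L b⟩ + ⟨b, L c⟩`, where `H` is the Hessian of the
Lagrangian `U + ⟨λ, g⟩`, plus the constraint forces `⟨a, Gᵀ n'⟩ = ⟨G a, n'⟩` and `⟨c, Gᵀ m'⟩`,
which vanish by tangency. The first pair cancels because Hessians of `C²` functions are symmetric,
the second because `L` is skew.
-/

open Matrix

section

variable {ι : Type*} [Fintype ι]

theorem isSymm_of_fderiv_gradient {U : (ι → ℝ) → ℝ} {gradU : (ι → ℝ) → ι → ℝ}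
    {H : Matrix ι ι ℝ} {x : ι → ℝ} (hU : ContDiffAt ℝ 2 U x)
    (hgradU : ∀ y v, fderiv ℝ U y v = gradU y ⬝ᵥ v)
    (hH : ∀ v, fderiv ℝ gradU x v = H *ᵥ v) : H.IsSymm := by
  classical
  have hgrad : gradU = fun y i => fderiv ℝ U y (Pi.single i 1) := by
    funext y i
    simp [hgradU, dotProduct_single]
  have hdU : DifferentiableAt ℝ (fderiv ℝ U) x :=
    (hU.fderiv_right (m := 1) (by norm_num)).differentiableAt one_ne_zero
  have hdUi (i : ι) : DifferentiableAt ℝ (fun y => fderiv ℝ U y (Pi.single i 1)) x :=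
    hdU.clm_apply (differentiableAt_const _)
  have hentry (i j : ι) :
      H i j = fderiv ℝ (fderiv ℝ U) x (Pi.single j 1) (Pi.single i 1) := by
    have h := congrFun (hH (Pi.single j 1)) i
    rw [hgrad, fderiv_pi hdUi] at h
    simpa [mulVec_single_one, fderiv_clm_apply hdU (differentiableAt_const _)] using h.symm
  have hsymm := hU.isSymmSndFDerivAt (by simp)
  exact IsSymm.ext fun i j => by rw [hentry, hentry, hsymm]

theorem fderiv_apply_eq_dotProduct {κ : Type*} {g : (ι → ℝ) → κ → ℝ} {G : (ι → ℝ) → Matrix κ ι ℝ}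
    (hg : Differentiable ℝ g) (hG : ∀ x v, fderiv ℝ g x v = G x *ᵥ v) (i : κ) (x v : ι → ℝ) :
    fderiv ℝ (fun y => g y i) x v = G x i ⬝ᵥ v := by
  rw [fderiv_apply (hg x)]
  simp [hG, mulVec]

theorem HasDerivAt.dotProduct {f g : ℝ → ι → ℝ} {f' g' : ι → ℝ} {t : ℝ}
    (hf : HasDerivAt f f' t) (hg : HasDerivAt g g' t) :
    HasDerivAt (fun s => f s ⬝ᵥ g s) (f' ⬝ᵥ g t + f t ⬝ᵥ g') t := by
  have := HasDerivAt.fun_sum (u := Finset.univ)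
    fun i _ => (hasDerivAt_pi.1 hf i).mul (hasDerivAt_pi.1 hg i)
  rw [Finset.sum_add_distrib] at this
  exact this

/-- `⟨(a, b), J_L (c, d)⟩` for the magnetic symplectic matrix `J_L = [[L, I], [-I, 0]]`. -/
def magneticForm (L : Matrix ι ι ℝ) (a b c d : ι → ℝ) : ℝ :=
  a ⬝ᵥ d - c ⬝ᵥ b + a ⬝ᵥ L *ᵥ c

theorem hasDerivAt_magneticForm (L : Matrix ι ι ℝ) {a b c d : ℝ → ι → ℝ}
    {a' b' c' d' : ι → ℝ} {t : ℝ} (ha : HasDerivAt a a' t) (hb : HasDerivAt b b' t)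
    (hc : HasDerivAt c c' t) (hd : HasDerivAt d d' t) :
    HasDerivAt (fun s => magneticForm L (a s) (b s) (c s) (d s))
      (magneticForm L a' b' (c t) (d t) + magneticForm L (a t) (b t) c' d') t := by
  have hLc : HasDerivAt (fun s => L *ᵥ c s) (L *ᵥ c') t :=
    (mulVecLin L).toContinuousLinearMap.hasFDerivAt.comp_hasDerivAt t hc
  refine (((ha.dotProduct hd).sub (hc.dotProduct hb)).add (ha.dotProduct hLc)).congr_deriv ?_
  simp only [magneticForm]
  ring

theorem magneticForm_linearized_add_eq_zero {κ : Type*} [Fintype κ] {H L : Matrix ι ι ℝ}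
    {G : Matrix κ ι ℝ} (hH : H.IsSymm) (hL : Lᵀ = -L) {a b c d : ι → ℝ} {μ ν : κ → ℝ}
    (ha : G *ᵥ a = 0) (hc : G *ᵥ c = 0) :
    magneticForm L b (-(H *ᵥ a) - L *ᵥ b - Gᵀ *ᵥ μ) c d
      + magneticForm L a b d (-(H *ᵥ c) - L *ᵥ d - Gᵀ *ᵥ ν) = 0 := by
  have hGa : a ⬝ᵥ Gᵀ *ᵥ ν = 0 := by rw [dotProduct_mulVec, vecMul_transpose, ha, zero_dotProduct]
  have hGc : c ⬝ᵥ Gᵀ *ᵥ μ = 0 := by rw [dotProduct_mulVec, vecMul_transpose, hc, zero_dotProduct]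
  have hHsymm : a ⬝ᵥ H *ᵥ c = c ⬝ᵥ H *ᵥ a := by
    rw [dotProduct_mulVec, ← mulVec_transpose, hH.eq, dotProduct_comm]
  have hLskew : b ⬝ᵥ L *ᵥ c = -(c ⬝ᵥ L *ᵥ b) := by
    rw [dotProduct_mulVec, ← mulVec_transpose, hL, neg_mulVec, neg_dotProduct, dotProduct_comm]
  simp only [magneticForm, dotProduct_sub, dotProduct_neg]
  rw [hGa, hGc, hHsymm, hLskew, dotProduct_comm d b]
  ring

end

theorem stmt1_general {m k : ℕ}
    (U : (Fin m → ℝ) → ℝ) (gradU : (Fin m → ℝ) → (Fin m → ℝ))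
    (HU : (Fin m → ℝ) → Matrix (Fin m) (Fin m) ℝ)
    (hU : ContDiff ℝ 2 U)
    (hgradU : ∀ x v, fderiv ℝ U x v = gradU x ⬝ᵥ v)
    (hHU : ∀ x v, fderiv ℝ gradU x v = (HU x).mulVec v)
    (g : (Fin m → ℝ) → (Fin k → ℝ)) (G : (Fin m → ℝ) → Matrix (Fin k) (Fin m) ℝ)
    (Hg : Fin k → (Fin m → ℝ) → Matrix (Fin m) (Fin m) ℝ)
    (hg : ContDiff ℝ 2 g)
    (hG : ∀ x v, fderiv ℝ g x v = (G x).mulVec v)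
    (hHg : ∀ (i : Fin k) x v, fderiv ℝ (fun y => G y i) x v = (Hg i x).mulVec v)
    (L : Matrix (Fin m) (Fin m) ℝ) (hL : Lᵀ = -L)
    (q : ℝ → (Fin m → ℝ)) (lam : ℝ → (Fin k → ℝ))
    (a b c d : ℝ → (Fin m → ℝ)) (m' n' : ℝ → (Fin k → ℝ))
    (ha : ∀ t, HasDerivAt a (b t) t)
    (hb : ∀ t, HasDerivAt b
      (-(HU (q t)).mulVec (a t) - L.mulVec (b t) - (G (q t))ᵀ.mulVec (m' t)
        - ∑ i, lam t i • (Hg i (q t)).mulVec (a t)) t)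
    (hc : ∀ t, HasDerivAt c (d t) t)
    (hd : ∀ t, HasDerivAt d
      (-(HU (q t)).mulVec (c t) - L.mulVec (d t) - (G (q t))ᵀ.mulVec (n' t)
        - ∑ i, lam t i • (Hg i (q t)).mulVec (c t)) t)
    (hca : ∀ t, (G (q t)).mulVec (a t) = 0)
    (hcc : ∀ t, (G (q t)).mulVec (c t) = 0) :
    ∀ s t : ℝ,
      a s ⬝ᵥ d s - c s ⬝ᵥ b s + a s ⬝ᵥ L.mulVec (c s)
        = a t ⬝ᵥ d t - c t ⬝ᵥ b t + a t ⬝ᵥ L.mulVec (c t) := by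
  -- the Hessian of the Lagrangian `U + ⟨λ, g⟩` along the trajectory
  set H : ℝ → Matrix (Fin m) (Fin m) ℝ := fun t => HU (q t) + ∑ i, lam t i • Hg i (q t)
  have hH (t : ℝ) : (H t).IsSymm := by
    have hHg_symm (i : Fin k) : (Hg i (q t)).IsSymm :=
      isSymm_of_fderiv_gradient ((contDiff_apply ℝ ℝ i).comp hg).contDiffAt
        (fderiv_apply_eq_dotProduct (hg.differentiable two_ne_zero) hG i) (hHg i (q t))
    refine (isSymm_of_fderiv_gradient hU.contDiffAt hgradU (hHU (q t))).add ?_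
    simp only [IsSymm, transpose_sum, transpose_smul, fun i => (hHg_symm i).eq]
  have hlagrangian (t : ℝ) (v w : Fin m → ℝ) (μ : Fin k → ℝ) :
      -(HU (q t) *ᵥ v) - w - (G (q t))ᵀ *ᵥ μ - ∑ i, lam t i • Hg i (q t) *ᵥ v
        = -(H t *ᵥ v) - w - (G (q t))ᵀ *ᵥ μ := by
    simp only [H, add_mulVec, sum_mulVec, smul_mulVec]
    abel
  have hconst (t : ℝ) : HasDerivAt (fun s => magneticForm L (a s) (b s) (c s) (d s)) 0 t := by
    have := hasDerivAt_magneticForm L (ha t) (hb t) (hc t) (hd t)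
    rwa [hlagrangian, hlagrangian,
      magneticForm_linearized_add_eq_zero (hH t) hL (hca t) (hcc t)] at this
  exact fun s t => is_const_of_deriv_eq_zero (fun t => (hconst t).differentiableAt)
    (fun t => (hconst t).deriv) s t

/-- The constrained magnetic Hamiltonian flow preserves the magnetic symplectic
2-form: along solutions of the variational (linearized) equations tangent to the
constraint set, the quantity `⟨a,d⟩ - ⟨c,b⟩ + ⟨a, L c⟩` is constant in time. -/
theorem stmt1 {m k : ℕ}
    (U : (Fin m → ℝ) → ℝ) (gradU : (Fin m → ℝ) → (Fin m → ℝ))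
    (HU : (Fin m → ℝ) → Matrix (Fin m) (Fin m) ℝ)
    (hU : ContDiff ℝ 2 U)
    (hgradU : ∀ x v, fderiv ℝ U x v = gradU x ⬝ᵥ v)
    (hHU : ∀ x v, fderiv ℝ gradU x v = (HU x).mulVec v)
    (g : (Fin m → ℝ) → (Fin k → ℝ)) (G : (Fin m → ℝ) → Matrix (Fin k) (Fin m) ℝ)
    (Hg : Fin k → (Fin m → ℝ) → Matrix (Fin m) (Fin m) ℝ)
    (hg : ContDiff ℝ 2 g)
    (hG : ∀ x v, fderiv ℝ g x v = (G x).mulVec v)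
    (hHg : ∀ (i : Fin k) x v, fderiv ℝ (fun y => G y i) x v = (Hg i x).mulVec v)
    (L : Matrix (Fin m) (Fin m) ℝ) (hL : Lᵀ = -L)
    (q p : ℝ → (Fin m → ℝ)) (lam : ℝ → (Fin k → ℝ))
    (hq : ∀ t, HasDerivAt q (p t) t)
    (a b c d : ℝ → (Fin m → ℝ)) (m' n' : ℝ → (Fin k → ℝ))
    (ha : ∀ t, HasDerivAt a (b t) t)
    (hb : ∀ t, HasDerivAt b
      (-(HU (q t)).mulVec (a t) - L.mulVec (b t) - (G (q t))ᵀ.mulVec (m' t)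
        - ∑ i, lam t i • (Hg i (q t)).mulVec (a t)) t)
    (hc : ∀ t, HasDerivAt c (d t) t)
    (hd : ∀ t, HasDerivAt d
      (-(HU (q t)).mulVec (c t) - L.mulVec (d t) - (G (q t))ᵀ.mulVec (n' t)
        - ∑ i, lam t i • (Hg i (q t)).mulVec (c t)) t)
    (hca : ∀ t, (G (q t)).mulVec (a t) = 0)
    (hcc : ∀ t, (G (q t)).mulVec (c t) = 0) :
    ∀ s t : ℝ,
      a s ⬝ᵥ d s - c s ⬝ᵥ b s + a s ⬝ᵥ L.mulVec (c s)
        = a t ⬝ᵥ d t - c t ⬝ᵥ b t + a t ⬝ᵥ L.mulVec (c t) :=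
  stmt1_general U gradU HU hU hgradU hHU g G Hg hg hG hHg L hL q lam a b c d m' n' ha hb hc hd hca
    hcc
end

section
/- Let U : ℝ^m → ℝ and g : ℝ^m → ℝ^k be twice continuously differentiable, with G(q) the Jacobian of g, let L be a real m×m skew-symmetric matrix, ε ∈ ℝ, and let μ, ν : ℝ^m × ℝ^m → ℝ^k be differentiable. Define Φ1_ε(q,p) = (q, p - (ε/2)∇U(q)), Φ2_ε(q,p) = (q + A(ε) p, exp(-εL) p) with A(ε) = ∫_0^ε exp(-sL) ds, Ψ_ε = Φ1_ε ∘ Φ2_ε ∘ Φ1_ε, and define T : ℝ^m × ℝ^m → ℝ^m × ℝ^m by: p̄(q,p) = p - (ε/2) G(q)ᵀ μ(q,p); (q̂(q,p), p̂(q,p)) = Ψ_ε(q, p̄(q,p)); T(q,p) = (q̂(q,p), p̂(q,p) - (ε/2) G(q̂(q,p))ᵀ ν(q,p)). Fix (q,p), suppose T is differentiable at (q,p), and let D be its total derivative there. Let u, v ∈ ℝ^m × ℝ^m be such that the q-components u_q, v_q satisfy G(q) u_q = 0 and G(q) v_q = 0, and such that the q-components of D u and D v lie in the kernel of G(q̂(q,p)).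 Then ⟨D u, J_L (D v)⟩ = ⟨u, J_L v⟩, where J_L is the 2m×2m block matrix [[L, I_m],[-I_m, 0]]. -/
/-!
Each factor of `T` has a derivative preserving the magnetic form
`ω_L(x, y) = ⟨x_q, L y_q⟩ + ⟨x_q, y_p⟩ - ⟨y_q, x_p⟩`. A momentum kick `p ↦ p - s` changes
`ω_L(x, y)` by `⟨y_q, Ds x_q⟩ - ⟨x_q, Ds y_q⟩`, so it is harmless as soon as `Ds` is symmetric on
the relevant vectors: for the kicks by `∇U` this is the symmetry of the Hessian, and for the
multiplier kicks `Ds = ∑ⱼ μⱼ ∇²gⱼ + G(q)ᵀ Dμ`, whose second term pairs to zero with `ker G(q)`.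
The drift `(q, p) ↦ (q + A p, e^{-εL} p)` preserves `ω_L` thanks to `L A = 1 - e^{-εL}` and
`Aᵀ e^{-εL} = A`, obtained by integrating `d/ds e^{-sL} = -L e^{-sL}` and using `Lᵀ = -L`.
-/

open Matrix

variable {m k : ℕ}

section Gradient

variable {φ : (Fin m → ℝ) → ℝ} {γ : (Fin m → ℝ) → Fin m → ℝ}

theorem eq_fderiv_apply_single (hγ : ∀ x v, fderiv ℝ φ x v = γ x ⬝ᵥ v) :
    γ = fun x i => fderiv ℝ φ x (Pi.single i 1) := by
  funext x i
  rw [hγ, dotProduct_single_one]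

theorem differentiable_of_fderiv_eq_dotProduct (hφ : ContDiff ℝ 2 φ)
    (hγ : ∀ x v, fderiv ℝ φ x v = γ x ⬝ᵥ v) : Differentiable ℝ γ := by
  have hφ' : Differentiable ℝ (fderiv ℝ φ) :=
    (hφ.fderiv_right (m := 1) (by norm_num)).differentiable one_ne_zero
  rw [eq_fderiv_apply_single hγ]
  exact differentiable_pi.2 fun i => hφ'.clm_apply (differentiable_const _)

theorem dotProduct_fderiv_eq_fderiv_fderiv (hφ : ContDiff ℝ 2 φ)
    (hγ : ∀ x v, fderiv ℝ φ x v = γ x ⬝ᵥ v) (x a b : Fin m → ℝ) :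
    a ⬝ᵥ fderiv ℝ γ x b = fderiv ℝ (fderiv ℝ φ) x b a := by
  have hφ' : Differentiable ℝ (fderiv ℝ φ) :=
    (hφ.fderiv_right (m := 1) (by norm_num)).differentiable one_ne_zero
  rw [eq_fderiv_apply_single hγ,
    fderiv_pi fun i => (hφ' x).clm_apply (differentiableAt_const _)]
  conv_rhs => rw [pi_eq_sum_univ' a, map_sum]
  simp [fderiv_clm_apply (hφ' x) (differentiableAt_const _), dotProduct]

theorem dotProduct_fderiv_comm_of_fderiv_eq_dotProduct (hφ : ContDiff ℝ 2 φ)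
    (hγ : ∀ x v, fderiv ℝ φ x v = γ x ⬝ᵥ v) (x a b : Fin m → ℝ) :
    a ⬝ᵥ fderiv ℝ γ x b = b ⬝ᵥ fderiv ℝ γ x a := by
  rw [dotProduct_fderiv_eq_fderiv_fderiv hφ hγ, dotProduct_fderiv_eq_fderiv_fderiv hφ hγ,
    (hφ.contDiffAt.isSymmSndFDerivAt (by simp)).eq]

end Gradient

section MagneticFlow

theorem mul_of_intervalIntegral (M : Matrix (Fin m) (Fin m) ℝ)
    {F : ℝ → Matrix (Fin m) (Fin m) ℝ} (hF : Continuous F) (a b : ℝ) :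
    M * (of fun i j => ∫ s in a..b, F s i j) = of fun i j => ∫ s in a..b, (M * F s) i j := by
  ext i j
  simp only [mul_apply, of_apply, ← intervalIntegral.integral_const_mul]
  exact (intervalIntegral.integral_finsetSum (f := fun l s => M i l * F s l j) fun l _ =>
    (continuous_const.mul (hF.matrix_elem l j)).intervalIntegrable a b).symm

theorem of_intervalIntegral_transpose_mul (M : Matrix (Fin m) (Fin m) ℝ)
    {F : ℝ → Matrix (Fin m) (Fin m) ℝ} (hF : Continuous F) (a b : ℝ) :
    (of fun i j => ∫ s in a..b, F s i j)ᵀ * M = of fun i j => ∫ s in a..b, ((F s)ᵀ * M) i j := by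
  ext i j
  simp only [mul_apply, transpose_apply, of_apply, ← intervalIntegral.integral_mul_const]
  exact (intervalIntegral.integral_finsetSum (f := fun l s => F s l i * M l j) fun l _ =>
    ((hF.matrix_elem l i).mul continuous_const).intervalIntegrable a b).symm

variable (L : Matrix (Fin m) (Fin m) ℝ)

theorem hasDerivAt_exp_neg_smul_apply (t : ℝ) (i j : Fin m) :
    HasDerivAt (fun s : ℝ => NormedSpace.exp (-(s • L)) i j)
      ((-L * NormedSpace.exp (-(t • L))) i j) t := by
  -- Matrices carry no global norm; any normed-algebra structure gives the derivative of `exp`.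
  let _ : NormedRing (Matrix (Fin m) (Fin m) ℝ) := Matrix.linftyOpNormedRing
  let _ : NormedAlgebra ℝ (Matrix (Fin m) (Fin m) ℝ) := Matrix.linftyOpNormedAlgebra
  have h := hasDerivAt_exp_smul_const' (𝕂 := ℝ) (-L) t
  simp only [smul_neg] at h
  exact (entryLinearMap ℝ ℝ i j).toContinuousLinearMap.hasFDerivAt.comp_hasDerivAt t h

theorem continuous_exp_neg_smul : Continuous fun s : ℝ => NormedSpace.exp (-(s • L)) :=
  continuous_matrix fun i j => continuous_iff_continuousAt.2 fun t =>
    (hasDerivAt_exp_neg_smul_apply L t i j).continuousAt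

theorem mul_of_integral_exp_neg_smul (ε : ℝ) :
    L * (of fun i j => ∫ s in (0:ℝ)..ε, NormedSpace.exp (-(s • L)) i j)
      = 1 - NormedSpace.exp (-(ε • L)) := by
  rw [mul_of_intervalIntegral L (continuous_exp_neg_smul L)]
  ext i j
  have hFTC := intervalIntegral.integral_eq_sub_of_hasDerivAt
    (fun t _ => hasDerivAt_exp_neg_smul_apply L t i j)
    (((continuous_const.matrix_mul (continuous_exp_neg_smul L)).matrix_elem i j).intervalIntegrable
      (μ := MeasureTheory.volume) 0 ε)
  simp only [neg_mul, Matrix.neg_apply, intervalIntegral.integral_neg, zero_smul, neg_zero,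
    NormedSpace.exp_zero] at hFTC
  rw [of_apply, Matrix.sub_apply]
  linarith

theorem of_integral_exp_neg_smul_transpose_mul_exp (hL : Lᵀ = -L) (ε : ℝ) :
    (of fun i j => ∫ s in (0:ℝ)..ε, NormedSpace.exp (-(s • L)) i j)ᵀ
        * NormedSpace.exp (-(ε • L))
      = of fun i j => ∫ s in (0:ℝ)..ε, NormedSpace.exp (-(s • L)) i j := by
  rw [of_intervalIntegral_transpose_mul _ (continuous_exp_neg_smul L)]
  have hshift (s : ℝ) : (NormedSpace.exp (-(s • L)))ᵀ * NormedSpace.exp (-(ε • L))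
      = NormedSpace.exp (-((ε - s) • L)) := by
    rw [← exp_transpose, transpose_neg, transpose_smul, hL, smul_neg, neg_neg,
      ← exp_add_of_commute _ _ (((Commute.refl L).smul_left s).smul_right ε).neg_right, sub_smul]
    abel_nf
  ext i j
  simp only [of_apply, hshift]
  simpa using intervalIntegral.integral_comp_sub_left (fun s => NormedSpace.exp (-(s • L)) i j) ε
    (a := 0) (b := ε)

end MagneticFlow

/-- `⟨x, J_L y⟩` for `J_L = [[L, I], [-I, 0]]`. -/
def magForm (L : Matrix (Fin m) (Fin m) ℝ) (x y : (Fin m → ℝ) × (Fin m → ℝ)) : ℝ :=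
  x.1 ⬝ᵥ L *ᵥ y.1 + x.1 ⬝ᵥ y.2 - y.1 ⬝ᵥ x.2

def PreservesMagForm (L : Matrix (Fin m) (Fin m) ℝ)
    (D : (Fin m → ℝ) × (Fin m → ℝ) →L[ℝ] (Fin m → ℝ) × (Fin m → ℝ)) : Prop :=
  ∀ x y, magForm L (D x) (D y) = magForm L x y

section MagForm

variable {L : Matrix (Fin m) (Fin m) ℝ}

theorem PreservesMagForm.comp {D₁ D₂ : (Fin m → ℝ) × (Fin m → ℝ) →L[ℝ] (Fin m → ℝ) × (Fin m → ℝ)}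
    (h₁ : PreservesMagForm L D₁) (h₂ : PreservesMagForm L D₂) :
    PreservesMagForm L (D₁.comp D₂) := fun x y => (h₁ _ _).trans (h₂ x y)

theorem magForm_sub_snd {x y : (Fin m → ℝ) × (Fin m → ℝ)} {s t : Fin m → ℝ}
    (h : x.1 ⬝ᵥ t = y.1 ⬝ᵥ s) : magForm L (x.1, x.2 - s) (y.1, y.2 - t) = magForm L x y := by
  simp only [magForm, dotProduct_sub, h]
  ring

noncomputable def drift (A E : Matrix (Fin m) (Fin m) ℝ) :
    (Fin m → ℝ) × (Fin m → ℝ) →L[ℝ] (Fin m → ℝ) × (Fin m → ℝ) :=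
  LinearMap.toContinuousLinearMap
    { toFun := fun y => (y.1 + A *ᵥ y.2, E *ᵥ y.2)
      map_add' := fun x y => by ext <;> simp [mulVec_add, add_add_add_comm]
      map_smul' := fun c x => by simp [mulVec_smul] }

@[simp]
theorem drift_apply (A E : Matrix (Fin m) (Fin m) ℝ) (y : (Fin m → ℝ) × (Fin m → ℝ)) :
    drift A E y = (y.1 + A *ᵥ y.2, E *ᵥ y.2) := rfl

theorem preservesMagForm_drift {A E : Matrix (Fin m) (Fin m) ℝ} (hL : Lᵀ = -L)
    (hA : L * A = 1 - E) (hAE : Aᵀ * E = A) : PreservesMagForm L (drift A E) := by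
  have hAL : Aᵀ * L = Eᵀ - 1 := by
    rw [← neg_neg (Aᵀ * L), ← mul_neg, ← hL, ← transpose_mul, hA]
    simp
  have hLA (u w : Fin m → ℝ) : u ⬝ᵥ L *ᵥ (A *ᵥ w) = u ⬝ᵥ w - u ⬝ᵥ E *ᵥ w := by
    rw [mulVec_mulVec, hA, sub_mulVec, one_mulVec, dotProduct_sub]
  have hAL' (u w : Fin m → ℝ) : (A *ᵥ u) ⬝ᵥ L *ᵥ w = w ⬝ᵥ E *ᵥ u - u ⬝ᵥ w := by
    rw [dotProduct_comm, ← dotProduct_transpose_mulVec, mulVec_mulVec, hAL, sub_mulVec,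
      one_mulVec, dotProduct_sub, dotProduct_transpose_mulVec]
  have hAE' (u w : Fin m → ℝ) : (A *ᵥ u) ⬝ᵥ E *ᵥ w = u ⬝ᵥ A *ᵥ w := by
    rw [dotProduct_comm, ← dotProduct_transpose_mulVec, mulVec_mulVec, hAE]
  intro x y
  simp only [drift_apply, magForm, mulVec_add, dotProduct_add, add_dotProduct, hLA, hAL', hAE']
  rw [dotProduct_comm (A *ᵥ x.2), dotProduct_comm x.2]
  ring

end MagForm

section Kick

variable {E : Type*} [NormedAddCommGroup E] [NormedSpace ℝ E]
  {F : E → (Fin m → ℝ) × (Fin m → ℝ)} {s : E → Fin m → ℝ} {z : E}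

theorem hasFDerivAt_kick {F' : E →L[ℝ] (Fin m → ℝ) × (Fin m → ℝ)} {s' : E →L[ℝ] Fin m → ℝ}
    (hF : HasFDerivAt F F' z) (hs : HasFDerivAt s s' z) (c : ℝ) :
    HasFDerivAt (fun z => ((F z).1, (F z).2 - c • s z))
      ((ContinuousLinearMap.fst ℝ _ _ ∘L F').prod (ContinuousLinearMap.snd ℝ _ _ ∘L F' - c • s'))
      z :=
  (hasFDerivAt_fst.comp z hF).prodMk ((hasFDerivAt_snd.comp z hF).sub (hs.const_smul c))

theorem fderiv_kick_apply (hF : DifferentiableAt ℝ F z) (hs : DifferentiableAt ℝ s z) (c : ℝ)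
    (x : E) :
    fderiv ℝ (fun z => ((F z).1, (F z).2 - c • s z)) z x
      = ((fderiv ℝ F z x).1, (fderiv ℝ F z x).2 - c • fderiv ℝ s z x) := by
  simp [(hasFDerivAt_kick hF.hasFDerivAt hs.hasFDerivAt c).fderiv]

theorem magForm_fderiv_kick (L : Matrix (Fin m) (Fin m) ℝ) (hF : DifferentiableAt ℝ F z)
    (hs : DifferentiableAt ℝ s z) (c : ℝ) {x y : E}
    (h : (fderiv ℝ F z x).1 ⬝ᵥ fderiv ℝ s z y = (fderiv ℝ F z y).1 ⬝ᵥ fderiv ℝ s z x) :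
    magForm L (fderiv ℝ (fun z => ((F z).1, (F z).2 - c • s z)) z x)
        (fderiv ℝ (fun z => ((F z).1, (F z).2 - c • s z)) z y)
      = magForm L (fderiv ℝ F z x) (fderiv ℝ F z y) := by
  rw [fderiv_kick_apply hF hs, fderiv_kick_apply hF hs]
  exact magForm_sub_snd (by simp only [dotProduct_smul, h])

end Kick

def gradientKick (c : ℝ) (γ : (Fin m → ℝ) → Fin m → ℝ) (y : (Fin m → ℝ) × (Fin m → ℝ)) :
    (Fin m → ℝ) × (Fin m → ℝ) :=
  (y.1, y.2 - c • γ y.1)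

section GradientKick

variable {φ : (Fin m → ℝ) → ℝ} {γ : (Fin m → ℝ) → Fin m → ℝ}

theorem differentiable_gradientKick (hγ : Differentiable ℝ γ) (c : ℝ) :
    Differentiable ℝ (gradientKick c γ) := fun y =>
  (hasFDerivAt_kick (hasFDerivAt_id y) ((hγ y.1).hasFDerivAt.comp y hasFDerivAt_fst)
    c).differentiableAt

theorem preservesMagForm_fderiv_gradientKick (L : Matrix (Fin m) (Fin m) ℝ)
    (hφ : ContDiff ℝ 2 φ) (hγ : ∀ x v, fderiv ℝ φ x v = γ x ⬝ᵥ v) (c : ℝ)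
    (y : (Fin m → ℝ) × (Fin m → ℝ)) : PreservesMagForm L (fderiv ℝ (gradientKick c γ) y) := by
  have hγd := differentiable_of_fderiv_eq_dotProduct hφ hγ
  have hs : HasFDerivAt (fun y : (Fin m → ℝ) × (Fin m → ℝ) => γ y.1) _ y :=
    (hγd y.1).hasFDerivAt.comp y hasFDerivAt_fst
  show PreservesMagForm L (fderiv ℝ (fun y => (y.1, y.2 - c • γ y.1)) y)
  intro x x'
  simpa using magForm_fderiv_kick L differentiableAt_id hs.differentiableAt c (x := x) (y := x')
    (by simpa [hs.fderiv] using dotProduct_fderiv_comm_of_fderiv_eq_dotProduct hφ hγ y.1 x.1 x'.1)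

end GradientKick

noncomputable def magneticStep (c : ℝ) (γ : (Fin m → ℝ) → Fin m → ℝ)
    (A E : Matrix (Fin m) (Fin m) ℝ) : (Fin m → ℝ) × (Fin m → ℝ) → (Fin m → ℝ) × (Fin m → ℝ) :=
  gradientKick c γ ∘ drift A E ∘ gradientKick c γ

section MagneticStep

variable {φ : (Fin m → ℝ) → ℝ} {γ : (Fin m → ℝ) → Fin m → ℝ} {A E : Matrix (Fin m) (Fin m) ℝ}

theorem differentiable_magneticStep (hγ : Differentiable ℝ γ) (c : ℝ) :
    Differentiable ℝ (magneticStep c γ A E) :=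
  (differentiable_gradientKick hγ c).comp
    ((drift A E).differentiable.comp (differentiable_gradientKick hγ c))

theorem preservesMagForm_fderiv_magneticStep {L : Matrix (Fin m) (Fin m) ℝ}
    (hφ : ContDiff ℝ 2 φ) (hγ : ∀ x v, fderiv ℝ φ x v = γ x ⬝ᵥ v) (hL : Lᵀ = -L)
    (hA : L * A = 1 - E) (hAE : Aᵀ * E = A) (c : ℝ) (y : (Fin m → ℝ) × (Fin m → ℝ)) :
    PreservesMagForm L (fderiv ℝ (magneticStep c γ A E) y) := by
  have hK := differentiable_gradientKick (differentiable_of_fderiv_eq_dotProduct hφ hγ) c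
  rw [magneticStep, fderiv_comp _ (hK _) ((drift A E).differentiable.comp hK y),
    fderiv_comp _ (drift A E).differentiableAt (hK y), ContinuousLinearMap.fderiv]
  exact (preservesMagForm_fderiv_gradientKick L hφ hγ c _).comp
    ((preservesMagForm_drift hL hA hAE).comp (preservesMagForm_fderiv_gradientKick L hφ hγ c y))

end MagneticStep

theorem transpose_mulVec_eq_sum (R : Matrix (Fin k) (Fin m) ℝ) (w : Fin k → ℝ) :
    Rᵀ *ᵥ w = ∑ j, w j • R j := by
  rw [mulVec_transpose, vecMul_eq_sum]

section TransposeMulVec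

variable {E : Type*} [NormedAddCommGroup E] [NormedSpace ℝ E]
  {R : E → Matrix (Fin k) (Fin m) ℝ} {w : E → Fin k → ℝ} {z : E}

theorem hasFDerivAt_transpose_mulVec {R' : Fin k → E →L[ℝ] Fin m → ℝ}
    {w' : E →L[ℝ] Fin k → ℝ} (hR : ∀ j, HasFDerivAt (fun z => R z j) (R' j) z)
    (hw : HasFDerivAt w w' z) :
    HasFDerivAt (fun z => (R z)ᵀ *ᵥ w z)
      (∑ j, (w z j • R' j + (ContinuousLinearMap.proj j ∘L w').smulRight (R z j))) z := by
  simp_rw [transpose_mulVec_eq_sum]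
  exact HasFDerivAt.fun_sum fun j _ => (hasFDerivAt_pi'.1 hw j).smul (hR j)

theorem fderiv_transpose_mulVec_apply (hR : ∀ j, DifferentiableAt ℝ (fun z => R z j) z)
    (hw : DifferentiableAt ℝ w z) (x : E) :
    fderiv ℝ (fun z => (R z)ᵀ *ᵥ w z) z x
      = ∑ j, w z j • fderiv ℝ (fun z => R z j) z x + (R z)ᵀ *ᵥ fderiv ℝ w z x := by
  rw [(hasFDerivAt_transpose_mulVec (fun j => (hR j).hasFDerivAt) hw.hasFDerivAt).fderiv,
    transpose_mulVec_eq_sum]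
  simp [Finset.sum_add_distrib]

end TransposeMulVec

section Jacobian

variable {g : (Fin m → ℝ) → Fin k → ℝ} {G : (Fin m → ℝ) → Matrix (Fin k) (Fin m) ℝ}

theorem fderiv_apply_eq_jacobian_row_dotProduct (hg : Differentiable ℝ g)
    (hG : ∀ x v, fderiv ℝ g x v = G x *ᵥ v) (j : Fin k) (x v : Fin m → ℝ) :
    fderiv ℝ (fun y => g y j) x v = G x j ⬝ᵥ v := by
  rw [fderiv_apply (hg x) j, ContinuousLinearMap.comp_apply, hG]
  rfl

theorem differentiable_jacobian_row (hg : ContDiff ℝ 2 g)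
    (hG : ∀ x v, fderiv ℝ g x v = G x *ᵥ v) (j : Fin k) : Differentiable ℝ fun x => G x j :=
  differentiable_of_fderiv_eq_dotProduct (contDiff_pi.1 hg j)
    (fderiv_apply_eq_jacobian_row_dotProduct (hg.differentiable two_ne_zero) hG j)

theorem dotProduct_fderiv_jacobian_row_comm (hg : ContDiff ℝ 2 g)
    (hG : ∀ x v, fderiv ℝ g x v = G x *ᵥ v) (j : Fin k) (x a b : Fin m → ℝ) :
    a ⬝ᵥ fderiv ℝ (fun x => G x j) x b = b ⬝ᵥ fderiv ℝ (fun x => G x j) x a :=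
  dotProduct_fderiv_comm_of_fderiv_eq_dotProduct (contDiff_pi.1 hg j)
    (fderiv_apply_eq_jacobian_row_dotProduct (hg.differentiable two_ne_zero) hG j) x a b

end Jacobian

def constraintKick {E : Type*} (c : ℝ) (G : (Fin m → ℝ) → Matrix (Fin k) (Fin m) ℝ)
    (F : E → (Fin m → ℝ) × (Fin m → ℝ)) (w : E → Fin k → ℝ) (z : E) :
    (Fin m → ℝ) × (Fin m → ℝ) :=
  ((F z).1, (F z).2 - c • (G (F z).1)ᵀ *ᵥ w z)

section ConstraintKick

variable {E : Type*} [NormedAddCommGroup E] [NormedSpace ℝ E]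
  {g : (Fin m → ℝ) → Fin k → ℝ} {G : (Fin m → ℝ) → Matrix (Fin k) (Fin m) ℝ}
  {F : E → (Fin m → ℝ) × (Fin m → ℝ)} {w : E → Fin k → ℝ} {z : E}

theorem differentiableAt_jacobian_row_comp (hg : ContDiff ℝ 2 g)
    (hG : ∀ x v, fderiv ℝ g x v = G x *ᵥ v) (hF : DifferentiableAt ℝ F z) (j : Fin k) :
    DifferentiableAt ℝ (fun z => G (F z).1 j) z :=
  (differentiable_jacobian_row hg hG j _).comp z hF.fst

theorem differentiableAt_jacobian_transpose_mulVec (hg : ContDiff ℝ 2 g)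
    (hG : ∀ x v, fderiv ℝ g x v = G x *ᵥ v) (hF : DifferentiableAt ℝ F z)
    (hw : DifferentiableAt ℝ w z) : DifferentiableAt ℝ (fun z => (G (F z).1)ᵀ *ᵥ w z) z :=
  (hasFDerivAt_transpose_mulVec
    (fun j => (differentiableAt_jacobian_row_comp hg hG hF j).hasFDerivAt)
    hw.hasFDerivAt).differentiableAt

theorem differentiableAt_constraintKick (hg : ContDiff ℝ 2 g)
    (hG : ∀ x v, fderiv ℝ g x v = G x *ᵥ v) (hF : DifferentiableAt ℝ F z)
    (hw : DifferentiableAt ℝ w z) (c : ℝ) : DifferentiableAt ℝ (constraintKick c G F w) z :=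
  hF.fst.prodMk (hF.snd.sub
    ((differentiableAt_jacobian_transpose_mulVec hg hG hF hw).const_smul c))

theorem fderiv_constraintKick_apply_fst (hg : ContDiff ℝ 2 g)
    (hG : ∀ x v, fderiv ℝ g x v = G x *ᵥ v) (hF : DifferentiableAt ℝ F z)
    (hw : DifferentiableAt ℝ w z) (c : ℝ) (x : E) :
    (fderiv ℝ (constraintKick c G F w) z x).1 = (fderiv ℝ F z x).1 := by
  unfold constraintKick
  rw [fderiv_kick_apply hF (differentiableAt_jacobian_transpose_mulVec hg hG hF hw)]

theorem magForm_fderiv_constraintKick (L : Matrix (Fin m) (Fin m) ℝ) (hg : ContDiff ℝ 2 g)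
    (hG : ∀ x v, fderiv ℝ g x v = G x *ᵥ v) (hF : DifferentiableAt ℝ F z)
    (hw : DifferentiableAt ℝ w z) (c : ℝ) {x y : E}
    (hx : G (F z).1 *ᵥ (fderiv ℝ F z x).1 = 0) (hy : G (F z).1 *ᵥ (fderiv ℝ F z y).1 = 0) :
    magForm L (fderiv ℝ (constraintKick c G F w) z x) (fderiv ℝ (constraintKick c G F w) z y)
      = magForm L (fderiv ℝ F z x) (fderiv ℝ F z y) := by
  have hR := differentiableAt_jacobian_row_comp hg hG hF
  have hRx (j : Fin k) (x : E) : fderiv ℝ (fun z => G (F z).1 j) z x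
      = fderiv ℝ (fun x => G x j) (F z).1 (fderiv ℝ F z x).1 := by
    have h : HasFDerivAt (fun z => G (F z).1 j)
        ((fderiv ℝ (fun x => G x j) (F z).1).comp
          ((ContinuousLinearMap.fst ℝ _ _).comp (fderiv ℝ F z))) z :=
      (differentiable_jacobian_row hg hG j _).hasFDerivAt.comp z hF.hasFDerivAt.fst
    rw [h.fderiv]
    rfl
  apply magForm_fderiv_kick L hF (differentiableAt_jacobian_transpose_mulVec hg hG hF hw)
  simp only [fderiv_transpose_mulVec_apply hR hw, hRx, dotProduct_add, dotProduct_sum,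
    dotProduct_smul, dotProduct_transpose_mulVec, hx, hy, dotProduct_zero,
    dotProduct_fderiv_jacobian_row_comm hg hG _ _ (fderiv ℝ F z x).1]

end ConstraintKick

theorem stmt14_general {m k : ℕ}
    (U : (Fin m → ℝ) → ℝ) (gradU : (Fin m → ℝ) → (Fin m → ℝ))
    (hU : ContDiff ℝ 2 U)
    (hgradU : ∀ x v, fderiv ℝ U x v = gradU x ⬝ᵥ v)
    (g : (Fin m → ℝ) → (Fin k → ℝ)) (G : (Fin m → ℝ) → Matrix (Fin k) (Fin m) ℝ)
    (hg : ContDiff ℝ 2 g)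
    (hG : ∀ x v, fderiv ℝ g x v = (G x).mulVec v)
    (L : Matrix (Fin m) (Fin m) ℝ) (hL : Lᵀ = -L)
    (ε : ℝ)
    (μ ν : (Fin m → ℝ) × (Fin m → ℝ) → (Fin k → ℝ))
    (hμ : Differentiable ℝ μ) (hν : Differentiable ℝ ν)
    (A : ℝ → Matrix (Fin m) (Fin m) ℝ)
    (hA : ∀ ε' : ℝ, A ε' = Matrix.of fun i j =>
      ∫ s in (0:ℝ)..ε', NormedSpace.exp (-(s • L)) i j)
    (Φ1 Φ2 Ψ : ℝ → (Fin m → ℝ) × (Fin m → ℝ) → (Fin m → ℝ) × (Fin m → ℝ))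
    (hΦ1 : ∀ ε' z, Φ1 ε' z = (z.1, z.2 - (ε'/2) • gradU z.1))
    (hΦ2 : ∀ ε' z, Φ2 ε' z =
      (z.1 + (A ε').mulVec z.2, (NormedSpace.exp (-(ε' • L))).mulVec z.2))
    (hΨ : ∀ ε', Ψ ε' = Φ1 ε' ∘ Φ2 ε' ∘ Φ1 ε')
    (T : (Fin m → ℝ) × (Fin m → ℝ) → (Fin m → ℝ) × (Fin m → ℝ))
    (hT : ∀ z, T z =
      ((Ψ ε (z.1, z.2 - (ε/2) • (G z.1)ᵀ.mulVec (μ z))).1,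
        (Ψ ε (z.1, z.2 - (ε/2) • (G z.1)ᵀ.mulVec (μ z))).2
          - (ε/2) • (G ((Ψ ε (z.1, z.2 - (ε/2) • (G z.1)ᵀ.mulVec (μ z))).1))ᵀ.mulVec (ν z)))
    (q p : Fin m → ℝ)
    (qhat : Fin m → ℝ)
    (hqhat : qhat = (Ψ ε (q, p - (ε/2) • (G q)ᵀ.mulVec (μ (q, p)))).1)
    (u v : (Fin m → ℝ) × (Fin m → ℝ))
    (hu : (G q).mulVec u.1 = 0) (hv : (G q).mulVec v.1 = 0)
    (hu' : (G qhat).mulVec ((fderiv ℝ T (q, p) u).1) = 0)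
    (hv' : (G qhat).mulVec ((fderiv ℝ T (q, p) v).1) = 0) :
    (fderiv ℝ T (q, p) u).1 ⬝ᵥ L.mulVec ((fderiv ℝ T (q, p) v).1)
      + (fderiv ℝ T (q, p) u).1 ⬝ᵥ (fderiv ℝ T (q, p) v).2
      - (fderiv ℝ T (q, p) v).1 ⬝ᵥ (fderiv ℝ T (q, p) u).2
    = u.1 ⬝ᵥ L.mulVec v.1 + u.1 ⬝ᵥ v.2 - v.1 ⬝ᵥ u.2 := by
  have hgradUd := differentiable_of_fderiv_eq_dotProduct hU hgradU
  have hΨ' : Ψ ε = magneticStep (ε/2) gradU (A ε) (NormedSpace.exp (-(ε • L))) := by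
    funext y
    simp only [hΨ, Function.comp_apply, hΦ1, hΦ2]
    rfl
  have hT' : T = constraintKick (ε/2) G (Ψ ε ∘ constraintKick (ε/2) G id μ) ν := funext hT
  have hK₀ : DifferentiableAt ℝ (constraintKick (ε/2) G id μ) (q, p) :=
    differentiableAt_constraintKick hg hG differentiableAt_id (hμ _) _
  have hΨd : Differentiable ℝ (Ψ ε) := hΨ' ▸ differentiable_magneticStep hgradUd _
  have hF : DifferentiableAt ℝ (Ψ ε ∘ constraintKick (ε/2) G id μ) (q, p) := (hΨd _).comp _ hK₀
  subst hqhat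
  rw [hT', fderiv_constraintKick_apply_fst hg hG hF (hν _)] at hu' hv'
  show magForm L (fderiv ℝ T (q, p) u) (fderiv ℝ T (q, p) v) = magForm L u v
  rw [hT', magForm_fderiv_constraintKick L hg hG hF (hν _) _ hu' hv', fderiv_comp _ (hΨd _) hK₀,
    ContinuousLinearMap.comp_apply, ContinuousLinearMap.comp_apply, hΨ',
    preservesMagForm_fderiv_magneticStep hU hgradU hL
      (hA ε ▸ mul_of_integral_exp_neg_smul L ε)
      (hA ε ▸ of_integral_exp_neg_smul_transpose_mul_exp L hL ε)]
  simpa using magForm_fderiv_constraintKick L hg hG differentiableAt_id (hμ _) (ε/2)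
    (x := u) (y := v) (by simpa using hu) (by simpa using hv)

/-- One step `T` of the manifold-constrained magnetic integrator (momentum
shift by `μ`, the Euclidean magnetic step `Ψ_ε`, momentum shift by `ν`)
preserves the magnetic symplectic 2-form
`⟨u, J_L v⟩ = ⟨u_q, L v_q⟩ + ⟨u_q, v_p⟩ - ⟨v_q, u_p⟩` on pairs of vectors
tangent to the constraint set (whose images under `DT` are again tangent). -/
theorem stmt14 {m k : ℕ}
    (U : (Fin m → ℝ) → ℝ) (gradU : (Fin m → ℝ) → (Fin m → ℝ))
    (hU : ContDiff ℝ 2 U)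
    (hgradU : ∀ x v, fderiv ℝ U x v = gradU x ⬝ᵥ v)
    (g : (Fin m → ℝ) → (Fin k → ℝ)) (G : (Fin m → ℝ) → Matrix (Fin k) (Fin m) ℝ)
    (hg : ContDiff ℝ 2 g)
    (hG : ∀ x v, fderiv ℝ g x v = (G x).mulVec v)
    (L : Matrix (Fin m) (Fin m) ℝ) (hL : Lᵀ = -L)
    (ε : ℝ)
    (μ ν : (Fin m → ℝ) × (Fin m → ℝ) → (Fin k → ℝ))
    (hμ : Differentiable ℝ μ) (hν : Differentiable ℝ ν)
    (A : ℝ → Matrix (Fin m) (Fin m) ℝ)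
    (hA : ∀ ε' : ℝ, A ε' = Matrix.of fun i j =>
      ∫ s in (0:ℝ)..ε', NormedSpace.exp (-(s • L)) i j)
    (Φ1 Φ2 Ψ : ℝ → (Fin m → ℝ) × (Fin m → ℝ) → (Fin m → ℝ) × (Fin m → ℝ))
    (hΦ1 : ∀ ε' z, Φ1 ε' z = (z.1, z.2 - (ε'/2) • gradU z.1))
    (hΦ2 : ∀ ε' z, Φ2 ε' z =
      (z.1 + (A ε').mulVec z.2, (NormedSpace.exp (-(ε' • L))).mulVec z.2))
    (hΨ : ∀ ε', Ψ ε' = Φ1 ε' ∘ Φ2 ε' ∘ Φ1 ε')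
    (T : (Fin m → ℝ) × (Fin m → ℝ) → (Fin m → ℝ) × (Fin m → ℝ))
    (hT : ∀ z, T z =
      ((Ψ ε (z.1, z.2 - (ε/2) • (G z.1)ᵀ.mulVec (μ z))).1,
        (Ψ ε (z.1, z.2 - (ε/2) • (G z.1)ᵀ.mulVec (μ z))).2
          - (ε/2) • (G ((Ψ ε (z.1, z.2 - (ε/2) • (G z.1)ᵀ.mulVec (μ z))).1))ᵀ.mulVec (ν z)))
    (q p : Fin m → ℝ)
    (hTdiff : DifferentiableAt ℝ T (q, p))
    (qhat : Fin m → ℝ)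
    (hqhat : qhat = (Ψ ε (q, p - (ε/2) • (G q)ᵀ.mulVec (μ (q, p)))).1)
    (u v : (Fin m → ℝ) × (Fin m → ℝ))
    (hu : (G q).mulVec u.1 = 0) (hv : (G q).mulVec v.1 = 0)
    (hu' : (G qhat).mulVec ((fderiv ℝ T (q, p) u).1) = 0)
    (hv' : (G qhat).mulVec ((fderiv ℝ T (q, p) v).1) = 0) :
    (fderiv ℝ T (q, p) u).1 ⬝ᵥ L.mulVec ((fderiv ℝ T (q, p) v).1)
      + (fderiv ℝ T (q, p) u).1 ⬝ᵥ (fderiv ℝ T (q, p) v).2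
      - (fderiv ℝ T (q, p) v).1 ⬝ᵥ (fderiv ℝ T (q, p) u).2
    = u.1 ⬝ᵥ L.mulVec v.1 + u.1 ⬝ᵥ v.2 - v.1 ⬝ᵥ u.2 :=
  stmt14_general U gradU hU hgradU g G hg hG L hL ε μ ν hμ hν A hA Φ1 Φ2 Ψ hΦ1 hΦ2 hΨ T hT q p qhat
    hqhat u v hu hv hu' hv'
end
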